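/- Let u be a smooth divergence-free vector field on ℝ³ with suitable decay and let ω³ = ∂₁u² − ∂₂u¹, u^h = (u¹,u²). Then the trilinear term satisfies: −Σ_{i,j,k} ∫ ∂_i u^j ∂_j u^k ∂_i u^k dx ≤ C(‖∂₃u‖_{L²} + ‖ω³‖_{L²}) ‖∇u‖_{L²}^{1/2} ‖∇²u‖_{L²}^{3/2}. -/

import Mathlib

open MeasureTheory

noncomputable section

abbrev E3 := EuclideanSpace ℝ (Fin 3)

def pd (i : Fin 3) (f : E3 → ℝ) : E3 → ℝ :=
  fun x => fderiv ℝ f x (EuclideanSpace.single i 1)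

open scoped NNReal ENNReal

namespace Stmt14Aux

theorem pd_smooth {f : E3 → ℝ} (hf : ContDiff ℝ (⊤ : ℕ∞) f) (i : Fin 3) : ContDiff ℝ (⊤ : ℕ∞) (pd i f) := by
  have h1 : ContDiff ℝ (⊤ : ℕ∞) (fderiv ℝ f) := hf.fderiv_right (by simp)
  exact (ContinuousLinearMap.apply ℝ ℝ (EuclideanSpace.single i 1)).contDiff.comp h1

theorem pd_cs {f : E3 → ℝ} (hf : HasCompactSupport f) (i : Fin 3) :
    HasCompactSupport (pd i f) := by
  have h1 : HasCompactSupport (fderiv ℝ f) := hf.fderiv ℝ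
  exact h1.comp_left (g := fun L : E3 →L[ℝ] ℝ => L (EuclideanSpace.single i 1)) rfl

theorem pd_cont {f : E3 → ℝ} (hf : ContDiff ℝ (⊤ : ℕ∞) f) (i : Fin 3) : Continuous (pd i f) :=
  (pd_smooth hf i).continuous

theorem ibp {f g : E3 → ℝ} (hf : ContDiff ℝ (⊤ : ℕ∞) f) (hcf : HasCompactSupport f)
    (hg : ContDiff ℝ (⊤ : ℕ∞) g) (hcg : HasCompactSupport g) (i : Fin 3) :
    ∫ x, pd i f x * g x = -∫ x, f x * pd i g x := by
  obtain ⟨C, hC⟩ := hf.lipschitzWith_of_hasCompactSupport hcf (by simp)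
  obtain ⟨D, hD⟩ := hg.lipschitzWith_of_hasCompactSupport hcg (by simp)
  have key := LipschitzWith.integral_lineDeriv_mul_eq (μ := volume) hC hD hcg
    (EuclideanSpace.single i 1)
  have h1 : ∀ x, lineDeriv ℝ f x (EuclideanSpace.single i 1) = pd i f x := fun x =>
    ((hf.differentiable (by simp)) x).lineDeriv_eq_fderiv
  have h2 : ∀ x, lineDeriv ℝ g x (-(EuclideanSpace.single i 1)) = -pd i g x := by
    intro x
    rw [((hg.differentiable (by simp)) x).lineDeriv_eq_fderiv, map_neg]
    rfl
  simp only [h1, h2] at key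
  rw [key, ← integral_neg]
  congr 1
  ext x
  ring

theorem pd_pd {g : E3 → ℝ} (hg : ContDiff ℝ (⊤ : ℕ∞) g) (a b : Fin 3) (x : E3) :
    pd a (pd b g) x =
      fderiv ℝ (fderiv ℝ g) x (EuclideanSpace.single a 1) (EuclideanSpace.single b 1) := by
  have hdc : DifferentiableAt ℝ (fderiv ℝ g) x :=
    ((hg.fderiv_right (m := (⊤ : ℕ∞)) (by simp)).differentiable (by simp)) x
  have : fderiv ℝ (pd b g) x =
      (fderiv ℝ (fderiv ℝ g) x).flip (EuclideanSpace.single b 1) := by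
    have := fderiv_clm_apply (c := fderiv ℝ g)
      (u := fun _ => EuclideanSpace.single b 1) (x := x) hdc (differentiableAt_const _)
    simp at this
    exact this
  simp only [pd, this]
  rfl

theorem pd_comm {g : E3 → ℝ} (hg : ContDiff ℝ (⊤ : ℕ∞) g) (a b : Fin 3) (x : E3) :
    pd a (pd b g) x = pd b (pd a g) x := by
  have hdiff : ∀ y, HasFDerivAt g (fderiv ℝ g y) y := fun y =>
    ((hg.differentiable (by simp)) y).hasFDerivAt
  have h2 : HasFDerivAt (fderiv ℝ g) (fderiv ℝ (fderiv ℝ g) x) x :=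
    (((hg.fderiv_right (m := (⊤ : ℕ∞)) (by simp)).differentiable (by simp)) x).hasFDerivAt
  rw [pd_pd hg, pd_pd hg]
  exact second_derivative_symmetric hdiff h2 _ _

theorem ibp_swap {f g : E3 → ℝ} (hf : ContDiff ℝ (⊤ : ℕ∞) f) (hcf : HasCompactSupport f)
    (hg : ContDiff ℝ (⊤ : ℕ∞) g) (hcg : HasCompactSupport g) (a b : Fin 3) :
    ∫ x, pd a f x * pd b g x = ∫ x, pd b f x * pd a g x := by
  rw [ibp hf hcf (pd_smooth hg b) (pd_cs hcg b) a]
  rw [ibp hf hcf (pd_smooth hg a) (pd_cs hcg a) b]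
  congr 1
  refine integral_congr_ae (Filter.Eventually.of_forall fun x => ?_)
  show f x * pd a (pd b g) x = f x * pd b (pd a g) x
  rw [pd_comm hg a b x]

/-- Cauchy–Schwarz for continuous compactly supported functions. -/
theorem cs2 {a b : E3 → ℝ} (ha : Continuous a) (hca : HasCompactSupport a)
    (hb : Continuous b) (hcb : HasCompactSupport b) :
    ∫ x, a x * b x ≤ Real.sqrt (∫ x, a x ^ 2) * Real.sqrt (∫ x, b x ^ 2) := by
  have hpq : Real.HolderConjugate 2 2 := Real.HolderConjugate.two_two
  have hia : Integrable (fun x => a x * b x) volume :=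
    (ha.mul hb).integrable_of_hasCompactSupport (hca.mul_right)
  have hiab : Integrable (fun x => |a x| * |b x|) volume := by
    simpa [abs_mul] using hia.abs
  have hma : MemLp (fun x => |a x|) (ENNReal.ofReal 2) volume := by
    simpa [Real.norm_eq_abs] using (ha.memLp_of_hasCompactSupport (μ := volume)
      (p := ENNReal.ofReal 2) hca).norm
  have hmb : MemLp (fun x => |b x|) (ENNReal.ofReal 2) volume := by
    simpa [Real.norm_eq_abs] using (hb.memLp_of_hasCompactSupport (μ := volume)
      (p := ENNReal.ofReal 2) hcb).norm
  have key := integral_mul_le_Lp_mul_Lq_of_nonneg (μ := volume) hpq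
    (Filter.Eventually.of_forall fun x => abs_nonneg (a x))
    (Filter.Eventually.of_forall fun x => abs_nonneg (b x)) hma hmb
  have h1 : ∫ x, a x * b x ≤ ∫ x, |a x| * |b x| := by
    refine integral_mono hia hiab fun x => ?_
    calc a x * b x ≤ |a x * b x| := le_abs_self _
    _ = |a x| * |b x| := abs_mul _ _
  refine h1.trans (key.trans_eq ?_)
  have e1 : ∀ c : E3 → ℝ, (∫ x, |c x| ^ (2:ℝ)) = ∫ x, c x ^ 2 := by
    intro c
    refine integral_congr_ae (Filter.Eventually.of_forall fun x => ?_)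
    show |c x| ^ (2:ℝ) = c x ^ 2
    rw [Real.rpow_two, sq_abs]
  rw [e1 a, e1 b, Real.sqrt_eq_rpow, Real.sqrt_eq_rpow]

theorem hcs_abs {a : E3 → ℝ} (hca : HasCompactSupport a) :
    HasCompactSupport (fun x => |a x|) :=
  hca.comp_left (g := fun t : ℝ => |t|) abs_zero

theorem hcs_sq {a : E3 → ℝ} (hca : HasCompactSupport a) :
    HasCompactSupport (fun x => a x ^ 2) :=
  hca.comp_left (g := fun t : ℝ => t ^ 2) (by norm_num)

/-- Hölder with exponents (2,4,4). -/
theorem tri_holder {a b c : E3 → ℝ} (ha : Continuous a) (hca : HasCompactSupport a)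
    (hb : Continuous b) (hcb : HasCompactSupport b)
    (hc : Continuous c) (hcc : HasCompactSupport c) :
    |∫ x, a x * b x * c x| ≤ Real.sqrt (∫ x, a x ^ 2) *
      (Real.sqrt (Real.sqrt (∫ x, b x ^ 4)) * Real.sqrt (Real.sqrt (∫ x, c x ^ 4))) := by
  have step1 : |∫ x, a x * b x * c x| ≤ ∫ x, |a x| * (|b x| * |c x|) := by
    calc |∫ x, a x * b x * c x| ≤ ∫ x, ‖a x * b x * c x‖ := by
          rw [← Real.norm_eq_abs]
          exact norm_integral_le_integral_norm _
    _ = ∫ x, |a x| * (|b x| * |c x|) := by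
        refine integral_congr_ae (Filter.Eventually.of_forall fun x => ?_)
        show ‖a x * b x * c x‖ = |a x| * (|b x| * |c x|)
        rw [Real.norm_eq_abs, abs_mul, abs_mul, mul_assoc]
  have step2 : ∫ x, |a x| * (|b x| * |c x|) ≤
      Real.sqrt (∫ x, |a x| ^ 2) * Real.sqrt (∫ x, (|b x| * |c x|) ^ 2) :=
    cs2 ha.abs (hcs_abs hca) (hb.abs.mul hc.abs) ((hcs_abs hcb).mul_right)
  have step3 : ∫ x, (|b x| * |c x|) ^ 2 ≤
      Real.sqrt (∫ x, b x ^ 4) * Real.sqrt (∫ x, c x ^ 4) := by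
    have h := cs2 (a := fun x => b x ^ 2) (b := fun x => c x ^ 2)
      (hb.pow 2) (hcs_sq hcb) (hc.pow 2) (hcs_sq hcc)
    have e1 : (∫ x, (|b x| * |c x|) ^ 2) = ∫ x, b x ^ 2 * c x ^ 2 := by
      refine integral_congr_ae (Filter.Eventually.of_forall fun x => ?_)
      show (|b x| * |c x|) ^ 2 = b x ^ 2 * c x ^ 2
      rw [mul_pow, sq_abs, sq_abs]
    have e2 : (∫ x, (b x ^ 2) ^ 2) = ∫ x, b x ^ 4 := by
      refine integral_congr_ae (Filter.Eventually.of_forall fun x => ?_)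
      show (b x ^ 2) ^ 2 = b x ^ 4
      ring
    have e3 : (∫ x, (c x ^ 2) ^ 2) = ∫ x, c x ^ 4 := by
      refine integral_congr_ae (Filter.Eventually.of_forall fun x => ?_)
      show (c x ^ 2) ^ 2 = c x ^ 4
      ring
    rw [e1]
    rw [e2, e3] at h
    exact h
  have e4 : (∫ x, |a x| ^ 2) = ∫ x, a x ^ 2 := by
    refine integral_congr_ae (Filter.Eventually.of_forall fun x => ?_)
    show |a x| ^ 2 = a x ^ 2
    rw [sq_abs]
  have step4 : Real.sqrt (∫ x, (|b x| * |c x|) ^ 2) ≤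
      Real.sqrt (Real.sqrt (∫ x, b x ^ 4)) * Real.sqrt (Real.sqrt (∫ x, c x ^ 4)) := by
    calc Real.sqrt (∫ x, (|b x| * |c x|) ^ 2)
        ≤ Real.sqrt (Real.sqrt (∫ x, b x ^ 4) * Real.sqrt (∫ x, c x ^ 4)) :=
          Real.sqrt_le_sqrt step3
      _ = Real.sqrt (Real.sqrt (∫ x, b x ^ 4)) * Real.sqrt (Real.sqrt (∫ x, c x ^ 4)) :=
          Real.sqrt_mul (Real.sqrt_nonneg _) _
  calc |∫ x, a x * b x * c x| ≤ Real.sqrt (∫ x, |a x| ^ 2) *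
        Real.sqrt (∫ x, (|b x| * |c x|) ^ 2) := step1.trans step2
    _ ≤ Real.sqrt (∫ x, a x ^ 2) *
        (Real.sqrt (Real.sqrt (∫ x, b x ^ 4)) * Real.sqrt (Real.sqrt (∫ x, c x ^ 4))) := by
        rw [e4]
        exact mul_le_mul_of_nonneg_left step4 (Real.sqrt_nonneg _)

def C₀ : ℝ := (eLpNormLESNormFDerivOfEqInnerConst (volume : Measure E3) 2 : ℝ≥0)

theorem C₀_nonneg : 0 ≤ C₀ := NNReal.coe_nonneg _

theorem opnorm_sq (ℓ : E3 →L[ℝ] ℝ) :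
    ‖ℓ‖ ^ 2 = ∑ l : Fin 3, (ℓ (EuclideanSpace.single l 1)) ^ 2 := by
  set v := (InnerProductSpace.toDual ℝ E3).symm ℓ with hv
  have hℓ : ℓ = InnerProductSpace.toDual ℝ E3 v := by simp [hv]
  have h1 : ‖ℓ‖ = ‖v‖ := by rw [hℓ]; simp
  have h2 : ∀ l, ℓ (EuclideanSpace.single l 1) = v l := by
    intro l
    rw [hℓ]
    simp [InnerProductSpace.toDual_apply_apply, EuclideanSpace.inner_single_right]
  have h3 : ‖v‖ ^ 2 = ∑ l, (v l) ^ 2 := by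
    rw [EuclideanSpace.norm_eq, Real.sq_sqrt (by positivity)]
    simp [Real.norm_eq_abs, sq_abs]
  rw [h1, h3]
  exact Finset.sum_congr rfl fun l _ => by rw [h2]

theorem sobolev {f : E3 → ℝ} (hf : ContDiff ℝ (⊤ : ℕ∞) f) (hcf : HasCompactSupport f) :
    (∫ x, f x ^ 6) ^ ((6:ℝ)⁻¹) ≤ C₀ * Real.sqrt (∫ x, ∑ l : Fin 3, (pd l f x) ^ 2) := by
  have hfin : (0:ℕ) < Module.finrank ℝ E3 := by
    rw [finrank_euclideanSpace_fin]; norm_num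
  have key := eLpNorm_le_eLpNorm_fderiv_of_eq_inner (μ := (volume : Measure E3))
    (u := f) (hf.of_le (by simp)) hcf (p := 2) (p' := 6) (by norm_num) hfin
    (by rw [finrank_euclideanSpace_fin]; norm_num)
  have hm6 : MemLp f ((6:ℝ≥0) : ℝ≥0∞) volume :=
    hf.continuous.memLp_of_hasCompactSupport hcf
  have hdf : Continuous (fderiv ℝ f) := hf.continuous_fderiv (by simp)
  have hcdf : HasCompactSupport (fderiv ℝ f) := hcf.fderiv ℝ
  have hm2 : MemLp (fderiv ℝ f) ((2:ℝ≥0) : ℝ≥0∞) volume :=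
    hdf.memLp_of_hasCompactSupport hcdf
  rw [hm6.eLpNorm_eq_integral_rpow_norm (by norm_num) (by norm_num),
    hm2.eLpNorm_eq_integral_rpow_norm (by norm_num) (by norm_num)] at key
  have ht6 : (((6:ℝ≥0)) : ℝ≥0∞).toReal = (6:ℝ) := by norm_num
  have ht2 : (((2:ℝ≥0)) : ℝ≥0∞).toReal = (2:ℝ) := by norm_num
  rw [ht6, ht2] at key
  rw [← ENNReal.ofReal_coe_nnreal, ← ENNReal.ofReal_mul (by positivity)] at key
  have key2 := (ENNReal.ofReal_le_ofReal_iff (by positivity)).mp key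
  have e6 : (∫ x, ‖f x‖ ^ (6:ℝ)) = ∫ x, f x ^ 6 := by
    refine integral_congr_ae (Filter.Eventually.of_forall fun x => ?_)
    show ‖f x‖ ^ (6:ℝ) = f x ^ 6
    rw [show (6:ℝ) = ((6:ℕ):ℝ) by norm_num, Real.rpow_natCast, Real.norm_eq_abs]
    rw [show (6:ℕ) = 2*3 by norm_num, pow_mul, pow_mul, sq_abs]
  have e2 : (∫ x, ‖fderiv ℝ f x‖ ^ (2:ℝ)) = ∫ x, ∑ l : Fin 3, (pd l f x) ^ 2 := by
    refine integral_congr_ae (Filter.Eventually.of_forall fun x => ?_)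
    show ‖fderiv ℝ f x‖ ^ (2:ℝ) = ∑ l : Fin 3, (pd l f x) ^ 2
    rw [Real.rpow_two, opnorm_sq]
    rfl
  rw [e6, e2] at key2
  rw [Real.sqrt_eq_rpow]
  calc (∫ x, f x ^ 6) ^ ((6:ℝ)⁻¹) ≤
      C₀ * (∫ x, ∑ l : Fin 3, (pd l f x) ^ 2) ^ ((2:ℝ)⁻¹) := key2
    _ = C₀ * (∫ x, ∑ l : Fin 3, (pd l f x) ^ 2) ^ ((1:ℝ)/2) := by rw [one_div]

theorem sqrt3_eq {x : ℝ} (hx : 0 ≤ x) :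
    Real.sqrt (Real.sqrt (Real.sqrt x)) = x ^ ((1:ℝ)/8) := by
  rw [Real.sqrt_eq_rpow x, Real.sqrt_eq_rpow (x ^ ((1:ℝ)/2)),
    Real.sqrt_eq_rpow ((x ^ ((1:ℝ)/2)) ^ ((1:ℝ)/2)), ← Real.rpow_mul hx,
    ← Real.rpow_mul hx]
  norm_num

/-- Interpolation + Sobolev: the L⁴-type bound. -/
theorem Q4_bound {b : E3 → ℝ} (hb : ContDiff ℝ (⊤ : ℕ∞) b) (hcb : HasCompactSupport b)
    {S1 S2 : ℝ} (hS1 : 0 ≤ S1) (hS2 : 0 ≤ S2)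
    (h2 : (∫ x, b x ^ 2) ≤ S1) (h6 : (∫ x, ∑ l : Fin 3, (pd l b x) ^ 2) ≤ S2) :
    Real.sqrt (Real.sqrt (∫ x, b x ^ 4)) ≤
      (C₀ * Real.sqrt S2) ^ ((3:ℝ)/4) * S1 ^ ((1:ℝ)/8) := by
  have hcont : Continuous b := hb.continuous
  have hb2 : (∫ x, b x ^ 4) ≤ Real.sqrt (∫ x, b x ^ 2) * Real.sqrt (∫ x, b x ^ 6) := by
    have h := cs2 (a := b) (b := fun x => b x ^ 3) hcont hcb (hcont.pow 3)
      (hcb.comp_left (g := fun t : ℝ => t ^ 3) (by norm_num))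
    have e1 : (∫ x, b x * b x ^ 3) = ∫ x, b x ^ 4 := by
      refine integral_congr_ae (Filter.Eventually.of_forall fun x => ?_)
      show b x * b x ^ 3 = b x ^ 4
      ring
    have e2 : (∫ x, (b x ^ 3) ^ 2) = ∫ x, b x ^ 6 := by
      refine integral_congr_ae (Filter.Eventually.of_forall fun x => ?_)
      show (b x ^ 3) ^ 2 = b x ^ 6
      ring
    rw [e1, e2] at h
    exact h
  have h6nn : (0:ℝ) ≤ ∫ x, b x ^ 6 :=
    integral_nonneg fun x => by positivity
  have h2nn : (0:ℝ) ≤ ∫ x, b x ^ 2 :=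
    integral_nonneg fun x => by positivity
  have hsob : (∫ x, b x ^ 6) ^ ((6:ℝ)⁻¹) ≤ C₀ * Real.sqrt S2 := by
    refine (sobolev hb hcb).trans ?_
    exact mul_le_mul_of_nonneg_left (Real.sqrt_le_sqrt h6) C₀_nonneg
  -- √√√(∫b⁶) ≤ (C₀ √S2)^{3/4}
  have hs6 : Real.sqrt (Real.sqrt (Real.sqrt (∫ x, b x ^ 6))) ≤
      (C₀ * Real.sqrt S2) ^ ((3:ℝ)/4) := by
    rw [sqrt3_eq h6nn]
    have : (∫ x, b x ^ 6) ^ ((1:ℝ)/8) = ((∫ x, b x ^ 6) ^ ((6:ℝ)⁻¹)) ^ ((3:ℝ)/4) := by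
      rw [← Real.rpow_mul h6nn]
      norm_num
    rw [this]
    exact Real.rpow_le_rpow (Real.rpow_nonneg h6nn _) hsob (by norm_num)
  have hs2 : Real.sqrt (Real.sqrt (Real.sqrt (∫ x, b x ^ 2))) ≤ S1 ^ ((1:ℝ)/8) := by
    rw [sqrt3_eq h2nn]
    exact Real.rpow_le_rpow h2nn h2 (by norm_num)
  calc Real.sqrt (Real.sqrt (∫ x, b x ^ 4))
      ≤ Real.sqrt (Real.sqrt (Real.sqrt (∫ x, b x ^ 2) * Real.sqrt (∫ x, b x ^ 6))) := by
        exact Real.sqrt_le_sqrt (Real.sqrt_le_sqrt hb2)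
    _ = Real.sqrt (Real.sqrt (Real.sqrt (∫ x, b x ^ 2))) *
        Real.sqrt (Real.sqrt (Real.sqrt (∫ x, b x ^ 6))) := by
        rw [Real.sqrt_mul (Real.sqrt_nonneg _), Real.sqrt_mul (Real.sqrt_nonneg _)]
    _ ≤ S1 ^ ((1:ℝ)/8) * (C₀ * Real.sqrt S2) ^ ((3:ℝ)/4) := by
        exact mul_le_mul hs2 hs6 (Real.sqrt_nonneg _) (Real.rpow_nonneg hS1 _)
    _ = (C₀ * Real.sqrt S2) ^ ((3:ℝ)/4) * S1 ^ ((1:ℝ)/8) := mul_comm _ _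

theorem horiz {u : Fin 3 → E3 → ℝ} (hsm : ∀ i, ContDiff ℝ (⊤ : ℕ∞) (u i))
    (hcs : ∀ i, HasCompactSupport (u i))
    (hdiv : ∀ x, pd 0 (u 0) x + pd 1 (u 1) x + pd 2 (u 2) x = 0)
    {i j : Fin 3} (hi : i ≠ 2) (hj : j ≠ 2) :
    (∫ x, pd i (u j) x ^ 2) ≤
      (∫ x, pd 2 (u 2) x ^ 2) + ∫ x, (pd 0 (u 1) x - pd 1 (u 0) x) ^ 2 := by
  have hIprod : ∀ a b c d : Fin 3, Integrable (fun x => pd a (u b) x * pd c (u d) x) volume :=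
    fun a b c d => ((pd_cont (hsm b) a).mul (pd_cont (hsm d) c)).integrable_of_hasCompactSupport
      ((pd_cs (hcs b) a).mul_right)
  have hIsq : ∀ a b : Fin 3, Integrable (fun x => pd a (u b) x ^ 2) volume := by
    intro a b
    have := hIprod a b a b
    refine this.congr ?_
    exact Filter.Eventually.of_forall fun x => by ring
  -- cross term identity
  have cross : (∫ x, pd 0 (u 0) x * pd 1 (u 1) x) = ∫ x, pd 0 (u 1) x * pd 1 (u 0) x := by
    rw [ibp_swap (hsm 0) (hcs 0) (hsm 1) (hcs 1) 0 1]
    refine integral_congr_ae (Filter.Eventually.of_forall fun x => ?_)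
    show pd 1 (u 0) x * pd 0 (u 1) x = pd 0 (u 1) x * pd 1 (u 0) x
    ring
  -- expansion of ∫ (f00+f11)²
  have E1 : (∫ x, (pd 0 (u 0) x + pd 1 (u 1) x) ^ 2) =
      (∫ x, pd 0 (u 0) x ^ 2) + (∫ x, pd 1 (u 1) x ^ 2) +
        2 * ∫ x, pd 0 (u 0) x * pd 1 (u 1) x := by
    have e : (fun x => (pd 0 (u 0) x + pd 1 (u 1) x) ^ 2) =
        fun x => (pd 0 (u 0) x ^ 2 + pd 1 (u 1) x ^ 2) +
          (2:ℝ) * (pd 0 (u 0) x * pd 1 (u 1) x) := funext fun x => by ring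
    have hadd : Integrable (fun x => pd 0 (u 0) x ^ 2 + pd 1 (u 1) x ^ 2) volume :=
      (hIsq 0 0).add (hIsq 1 1)
    rw [e, integral_add hadd ((hIprod 0 0 1 1).const_mul 2),
      integral_add (hIsq 0 0) (hIsq 1 1), MeasureTheory.integral_const_mul]
  have E2 : (∫ x, (pd 0 (u 1) x - pd 1 (u 0) x) ^ 2) =
      (∫ x, pd 0 (u 1) x ^ 2) + (∫ x, pd 1 (u 0) x ^ 2) -
        2 * ∫ x, pd 0 (u 1) x * pd 1 (u 0) x := by
    have e : (fun x => (pd 0 (u 1) x - pd 1 (u 0) x) ^ 2) =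
        fun x => (pd 0 (u 1) x ^ 2 + pd 1 (u 0) x ^ 2) -
          (2:ℝ) * (pd 0 (u 1) x * pd 1 (u 0) x) := funext fun x => by ring
    have hadd : Integrable (fun x => pd 0 (u 1) x ^ 2 + pd 1 (u 0) x ^ 2) volume :=
      (hIsq 0 1).add (hIsq 1 0)
    rw [e, integral_sub hadd ((hIprod 0 1 1 0).const_mul 2),
      integral_add (hIsq 0 1) (hIsq 1 0), MeasureTheory.integral_const_mul]
  have Ediv : (∫ x, (pd 0 (u 0) x + pd 1 (u 1) x) ^ 2) = ∫ x, pd 2 (u 2) x ^ 2 := by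
    refine integral_congr_ae (Filter.Eventually.of_forall fun x => ?_)
    show (pd 0 (u 0) x + pd 1 (u 1) x) ^ 2 = pd 2 (u 2) x ^ 2
    have h : pd 0 (u 0) x + pd 1 (u 1) x = -pd 2 (u 2) x := by linarith [hdiv x]
    rw [h]
    ring
  have hnn : ∀ a b : Fin 3, (0:ℝ) ≤ ∫ x, pd a (u b) x ^ 2 :=
    fun a b => integral_nonneg fun x => sq_nonneg _
  -- the four-term sum identity
  have main : (∫ x, pd 0 (u 0) x ^ 2) + (∫ x, pd 0 (u 1) x ^ 2) +
      (∫ x, pd 1 (u 0) x ^ 2) + (∫ x, pd 1 (u 1) x ^ 2) =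
      (∫ x, pd 2 (u 2) x ^ 2) + ∫ x, (pd 0 (u 1) x - pd 1 (u 0) x) ^ 2 := by
    rw [← Ediv, E1, E2, cross]
    ring
  have h00 : (∫ x, pd 0 (u 0) x ^ 2) ≤
      (∫ x, pd 2 (u 2) x ^ 2) + ∫ x, (pd 0 (u 1) x - pd 1 (u 0) x) ^ 2 := by
    rw [← main]; linarith [hnn 0 1, hnn 1 0, hnn 1 1]
  have h01 : (∫ x, pd 0 (u 1) x ^ 2) ≤
      (∫ x, pd 2 (u 2) x ^ 2) + ∫ x, (pd 0 (u 1) x - pd 1 (u 0) x) ^ 2 := by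
    rw [← main]; linarith [hnn 0 0, hnn 1 0, hnn 1 1]
  have h10 : (∫ x, pd 1 (u 0) x ^ 2) ≤
      (∫ x, pd 2 (u 2) x ^ 2) + ∫ x, (pd 0 (u 1) x - pd 1 (u 0) x) ^ 2 := by
    rw [← main]; linarith [hnn 0 0, hnn 0 1, hnn 1 1]
  have h11 : (∫ x, pd 1 (u 1) x ^ 2) ≤
      (∫ x, pd 2 (u 2) x ^ 2) + ∫ x, (pd 0 (u 1) x - pd 1 (u 0) x) ^ 2 := by
    rw [← main]; linarith [hnn 0 0, hnn 0 1, hnn 1 0]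
  fin_cases i <;> fin_cases j <;>
    first
      | (exact absurd rfl hi)
      | (exact absurd rfl hj)
      | exact h00
      | exact h01
      | exact h10
      | exact h11

end Stmt14Aux

open Stmt14Aux

/-- Trilinear estimate:
`-Σ_{i,j,k} ∫ ∂_i u^j ∂_j u^k ∂_i u^k dx ≤ C(‖∂₃u‖₂ + ‖ω³‖₂)‖∇u‖₂^{1/2}‖∇²u‖₂^{3/2}`
for smooth, compactly supported divergence-free `u` on `ℝ³`. -/
theorem stmt_14 :
    ∃ C : ℝ, 0 < C ∧ ∀ u : Fin 3 → E3 → ℝ,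
      (∀ i, ContDiff ℝ (⊤ : ℕ∞) (u i)) → (∀ i, HasCompactSupport (u i)) →
      (∀ x, pd 0 (u 0) x + pd 1 (u 1) x + pd 2 (u 2) x = 0) →
      -(∑ i : Fin 3, ∑ j : Fin 3, ∑ k : Fin 3,
          ∫ x, pd i (u j) x * pd j (u k) x * pd i (u k) x) ≤
        C * (Real.sqrt (∫ x, ∑ i : Fin 3, (pd 2 (u i) x) ^ 2) +
              Real.sqrt (∫ x, (pd 0 (u 1) x - pd 1 (u 0) x) ^ 2)) *
          (Real.sqrt (∫ x, ∑ i : Fin 3, ∑ j : Fin 3, (pd i (u j) x) ^ 2)) ^ ((1 : ℝ) / 2) *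
          (Real.sqrt
            (∫ x, ∑ i : Fin 3, ∑ j : Fin 3, ∑ k : Fin 3,
              (pd i (pd j (u k)) x) ^ 2)) ^ ((3 : ℝ) / 2) := by
  classical
  refine ⟨27 * C₀ ^ ((3:ℝ)/2) + 1, by
    have h := Real.rpow_nonneg C₀_nonneg ((3:ℝ)/2)
    linarith, fun u hsm hcs hdiv => ?_⟩
  set SA := ∫ x, ∑ i : Fin 3, (pd 2 (u i) x) ^ 2 with hSAdef
  set SB := ∫ x, (pd 0 (u 1) x - pd 1 (u 0) x) ^ 2 with hSBdef
  set S1 := ∫ x, ∑ i : Fin 3, ∑ j : Fin 3, (pd i (u j) x) ^ 2 with hS1def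
  set S2 := ∫ x, ∑ i : Fin 3, ∑ j : Fin 3, ∑ k : Fin 3, (pd i (pd j (u k)) x) ^ 2 with hS2def
  have h0SA : 0 ≤ SA := by
    rw [hSAdef]; exact integral_nonneg fun x => Finset.sum_nonneg fun _ _ => sq_nonneg _
  have h0SB : 0 ≤ SB := by
    rw [hSBdef]; exact integral_nonneg fun x => sq_nonneg _
  have h0S1 : 0 ≤ S1 := by
    rw [hS1def]
    exact integral_nonneg fun x =>
      Finset.sum_nonneg fun _ _ => Finset.sum_nonneg fun _ _ => sq_nonneg _
  have h0S2 : 0 ≤ S2 := by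
    rw [hS2def]
    exact integral_nonneg fun x => Finset.sum_nonneg fun _ _ =>
      Finset.sum_nonneg fun _ _ => Finset.sum_nonneg fun _ _ => sq_nonneg _
  -- continuity / support / integrability helpers
  have hContPd : ∀ a b : Fin 3, Continuous (pd a (u b)) := fun a b => pd_cont (hsm b) a
  have hCsPd : ∀ a b : Fin 3, HasCompactSupport (pd a (u b)) := fun a b => pd_cs (hcs b) a
  have hIsq : ∀ a b : Fin 3, Integrable (fun x => pd a (u b) x ^ 2) volume := fun a b =>
    ((hContPd a b).pow 2).integrable_of_hasCompactSupport (hcs_sq (hCsPd a b))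
  have hIsq2 : ∀ l a b : Fin 3, Integrable (fun x => pd l (pd a (u b)) x ^ 2) volume :=
    fun l a b =>
    ((pd_cont (pd_smooth (hsm b) a) l).pow 2).integrable_of_hasCompactSupport
      (hcs_sq (pd_cs (pd_cs (hcs b) a) l))
  have hSAint : Integrable (fun x => ∑ i : Fin 3, (pd 2 (u i) x) ^ 2) volume :=
    integrable_finset_sum _ fun i _ => hIsq 2 i
  have hS1int : Integrable (fun x => ∑ i : Fin 3, ∑ j : Fin 3, (pd i (u j) x) ^ 2) volume :=
    integrable_finset_sum _ fun i _ => integrable_finset_sum _ fun j _ => hIsq i j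
  have hS2int : Integrable
      (fun x => ∑ i : Fin 3, ∑ j : Fin 3, ∑ k : Fin 3, (pd i (pd j (u k)) x) ^ 2) volume :=
    integrable_finset_sum _ fun i _ => integrable_finset_sum _ fun j _ =>
      integrable_finset_sum _ fun k _ => hIsq2 i j k
  -- component bounds
  have hcompA : ∀ k : Fin 3, (∫ x, pd 2 (u k) x ^ 2) ≤ SA := by
    intro k
    rw [hSAdef]
    refine integral_mono (hIsq 2 k) hSAint fun x => ?_
    exact Finset.single_le_sum (f := fun i => pd 2 (u i) x ^ 2)
      (fun i _ => sq_nonneg _) (Finset.mem_univ k)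
  have hcomp1 : ∀ a b : Fin 3, (∫ x, pd a (u b) x ^ 2) ≤ S1 := by
    intro a b
    rw [hS1def]
    refine integral_mono (hIsq a b) hS1int fun x => ?_
    calc pd a (u b) x ^ 2 ≤ ∑ j : Fin 3, (pd a (u j) x) ^ 2 :=
        Finset.single_le_sum (f := fun j => pd a (u j) x ^ 2)
          (fun j _ => sq_nonneg _) (Finset.mem_univ b)
    _ ≤ ∑ i : Fin 3, ∑ j : Fin 3, (pd i (u j) x) ^ 2 :=
        Finset.single_le_sum (f := fun i => ∑ j : Fin 3, (pd i (u j) x) ^ 2)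
          (fun i _ => Finset.sum_nonneg fun j _ => sq_nonneg _) (Finset.mem_univ a)
  have hcomp2 : ∀ a b : Fin 3,
      (∫ x, ∑ l : Fin 3, (pd l (pd a (u b)) x) ^ 2) ≤ S2 := by
    intro a b
    rw [hS2def]
    refine integral_mono (integrable_finset_sum _ fun l _ => hIsq2 l a b) hS2int fun x => ?_
    refine Finset.sum_le_sum fun l _ => ?_
    calc (pd l (pd a (u b)) x) ^ 2 ≤ ∑ k : Fin 3, (pd l (pd a (u k)) x) ^ 2 :=
        Finset.single_le_sum (f := fun k => (pd l (pd a (u k)) x) ^ 2)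
          (fun k _ => sq_nonneg _) (Finset.mem_univ b)
    _ ≤ ∑ j : Fin 3, ∑ k : Fin 3, (pd l (pd j (u k)) x) ^ 2 :=
        Finset.single_le_sum (f := fun j => ∑ k : Fin 3, (pd l (pd j (u k)) x) ^ 2)
          (fun j _ => Finset.sum_nonneg fun k _ => sq_nonneg _) (Finset.mem_univ a)
  -- L⁴-type bound
  have hQ4 : ∀ a b : Fin 3, Real.sqrt (Real.sqrt (∫ x, pd a (u b) x ^ 4)) ≤
      (C₀ * Real.sqrt S2) ^ ((3:ℝ)/4) * S1 ^ ((1:ℝ)/8) := fun a b =>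
    Q4_bound (pd_smooth (hsm b) a) (pd_cs (hcs b) a) h0S1 h0S2 (hcomp1 a b) (hcomp2 a b)
  -- L² factors
  have hsqA : ∀ k : Fin 3, Real.sqrt (∫ x, pd 2 (u k) x ^ 2) ≤
      Real.sqrt SA + Real.sqrt SB := fun k =>
    (Real.sqrt_le_sqrt (hcompA k)).trans (le_add_of_nonneg_right (Real.sqrt_nonneg _))
  have hsqH : ∀ i j : Fin 3, i ≠ 2 → j ≠ 2 →
      Real.sqrt (∫ x, pd i (u j) x ^ 2) ≤ Real.sqrt SA + Real.sqrt SB := by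
    intro i j hi hj
    have h1 := horiz hsm hcs hdiv hi hj
    have h2 : (∫ x, pd i (u j) x ^ 2) ≤ SA + SB := by
      have h3 := hcompA 2
      rw [← hSBdef] at h1
      linarith
    refine (Real.sqrt_le_sqrt h2).trans ?_
    rw [Real.sqrt_le_iff]
    constructor
    · positivity
    · nlinarith [Real.sq_sqrt h0SA, Real.sq_sqrt h0SB,
        mul_nonneg (Real.sqrt_nonneg SA) (Real.sqrt_nonneg SB)]
  set M := (C₀ * Real.sqrt S2) ^ ((3:ℝ)/4) * S1 ^ ((1:ℝ)/8) with hM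
  have hMnn : 0 ≤ M := by
    rw [hM]
    exact mul_nonneg (Real.rpow_nonneg (mul_nonneg C₀_nonneg (Real.sqrt_nonneg _)) _)
      (Real.rpow_nonneg h0S1 _)
  have hABnn : 0 ≤ Real.sqrt SA + Real.sqrt SB :=
    add_nonneg (Real.sqrt_nonneg _) (Real.sqrt_nonneg _)
  -- per-term bound
  have hterm : ∀ i j k : Fin 3,
      -(∫ x, pd i (u j) x * pd j (u k) x * pd i (u k) x) ≤
        (Real.sqrt SA + Real.sqrt SB) * (M * M) := by
    intro i j k
    by_cases hj : j = 2
    · subst hj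
      have hre : (∫ x, pd i (u 2) x * pd 2 (u k) x * pd i (u k) x) =
          ∫ x, pd 2 (u k) x * pd i (u 2) x * pd i (u k) x := by
        refine integral_congr_ae (Filter.Eventually.of_forall fun x => ?_)
        show pd i (u 2) x * pd 2 (u k) x * pd i (u k) x =
          pd 2 (u k) x * pd i (u 2) x * pd i (u k) x
        ring
      calc -(∫ x, pd i (u 2) x * pd 2 (u k) x * pd i (u k) x)
          ≤ |∫ x, pd 2 (u k) x * pd i (u 2) x * pd i (u k) x| := by
            rw [← hre]; exact neg_le_abs _
        _ ≤ Real.sqrt (∫ x, pd 2 (u k) x ^ 2) *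
            (Real.sqrt (Real.sqrt (∫ x, pd i (u 2) x ^ 4)) *
              Real.sqrt (Real.sqrt (∫ x, pd i (u k) x ^ 4))) :=
            tri_holder (hContPd 2 k) (hCsPd 2 k) (hContPd i 2) (hCsPd i 2)
              (hContPd i k) (hCsPd i k)
        _ ≤ (Real.sqrt SA + Real.sqrt SB) * (M * M) := by
            refine mul_le_mul (hsqA k) ?_ (by positivity) hABnn
            exact mul_le_mul (hQ4 i 2) (hQ4 i k) (by positivity) hMnn
    · have hfac : Real.sqrt (∫ x, pd i (u j) x ^ 2) ≤ Real.sqrt SA + Real.sqrt SB := by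
        by_cases hi : i = 2
        · subst hi
          exact (Real.sqrt_le_sqrt (hcompA j)).trans
            (le_add_of_nonneg_right (Real.sqrt_nonneg _))
        · exact hsqH i j hi hj
      calc -(∫ x, pd i (u j) x * pd j (u k) x * pd i (u k) x)
          ≤ |∫ x, pd i (u j) x * pd j (u k) x * pd i (u k) x| := neg_le_abs _
        _ ≤ Real.sqrt (∫ x, pd i (u j) x ^ 2) *
            (Real.sqrt (Real.sqrt (∫ x, pd j (u k) x ^ 4)) *
              Real.sqrt (Real.sqrt (∫ x, pd i (u k) x ^ 4))) :=
            tri_holder (hContPd i j) (hCsPd i j) (hContPd j k) (hCsPd j k)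
              (hContPd i k) (hCsPd i k)
        _ ≤ (Real.sqrt SA + Real.sqrt SB) * (M * M) := by
            refine mul_le_mul hfac ?_ (by positivity) hABnn
            exact mul_le_mul (hQ4 j k) (hQ4 i k) (by positivity) hMnn
  -- sum up
  have hsum : -(∑ i : Fin 3, ∑ j : Fin 3, ∑ k : Fin 3,
      ∫ x, pd i (u j) x * pd j (u k) x * pd i (u k) x) ≤
      27 * ((Real.sqrt SA + Real.sqrt SB) * (M * M)) := by
    have e : -(∑ i : Fin 3, ∑ j : Fin 3, ∑ k : Fin 3,
        ∫ x, pd i (u j) x * pd j (u k) x * pd i (u k) x) =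
        ∑ i : Fin 3, ∑ j : Fin 3, ∑ k : Fin 3,
          -(∫ x, pd i (u j) x * pd j (u k) x * pd i (u k) x) := by
      simp [Finset.sum_neg_distrib]
    rw [e]
    calc (∑ i : Fin 3, ∑ j : Fin 3, ∑ k : Fin 3,
        -(∫ x, pd i (u j) x * pd j (u k) x * pd i (u k) x))
        ≤ ∑ _i : Fin 3, ∑ _j : Fin 3, ∑ _k : Fin 3,
            (Real.sqrt SA + Real.sqrt SB) * (M * M) := by
          refine Finset.sum_le_sum fun i _ => Finset.sum_le_sum fun j _ =>
            Finset.sum_le_sum fun k _ => hterm i j k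
      _ = 27 * ((Real.sqrt SA + Real.sqrt SB) * (M * M)) := by
          simp [Finset.sum_const, Finset.card_univ]
          ring
  refine hsum.trans ?_
  -- final algebra
  have hMM : M * M = C₀ ^ ((3:ℝ)/2) *
      ((Real.sqrt S1) ^ ((1:ℝ)/2) * (Real.sqrt S2) ^ ((3:ℝ)/2)) := by
    have e1 : (C₀ * Real.sqrt S2) ^ ((3:ℝ)/4) * (C₀ * Real.sqrt S2) ^ ((3:ℝ)/4) =
        (C₀ * Real.sqrt S2) ^ ((3:ℝ)/2) := by
      rw [← Real.rpow_add' (mul_nonneg C₀_nonneg (Real.sqrt_nonneg _)) (by norm_num)]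
      norm_num
    have e2 : S1 ^ ((1:ℝ)/8) * S1 ^ ((1:ℝ)/8) = S1 ^ ((1:ℝ)/4) := by
      rw [← Real.rpow_add' h0S1 (by norm_num)]
      norm_num
    have e3 : (C₀ * Real.sqrt S2) ^ ((3:ℝ)/2) =
        C₀ ^ ((3:ℝ)/2) * (Real.sqrt S2) ^ ((3:ℝ)/2) :=
      Real.mul_rpow C₀_nonneg (Real.sqrt_nonneg _)
    have e4 : S1 ^ ((1:ℝ)/4) = (Real.sqrt S1) ^ ((1:ℝ)/2) := by
      rw [Real.sqrt_eq_rpow, ← Real.rpow_mul h0S1]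
      norm_num
    calc M * M = ((C₀ * Real.sqrt S2) ^ ((3:ℝ)/4) * (C₀ * Real.sqrt S2) ^ ((3:ℝ)/4)) *
        (S1 ^ ((1:ℝ)/8) * S1 ^ ((1:ℝ)/8)) := by rw [hM]; ring
      _ = C₀ ^ ((3:ℝ)/2) * ((Real.sqrt S1) ^ ((1:ℝ)/2) * (Real.sqrt S2) ^ ((3:ℝ)/2)) := by
          rw [e1, e2, e3, e4]; ring
  have hP : 0 ≤ (Real.sqrt SA + Real.sqrt SB) *
      ((Real.sqrt S1) ^ ((1:ℝ)/2) * (Real.sqrt S2) ^ ((3:ℝ)/2)) := by positivity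
  have hC0r : 0 ≤ C₀ ^ ((3:ℝ)/2) := Real.rpow_nonneg C₀_nonneg _
  calc 27 * ((Real.sqrt SA + Real.sqrt SB) * (M * M))
      = (27 * C₀ ^ ((3:ℝ)/2)) * ((Real.sqrt SA + Real.sqrt SB) *
        ((Real.sqrt S1) ^ ((1:ℝ)/2) * (Real.sqrt S2) ^ ((3:ℝ)/2))) := by
        rw [hMM]; ring
    _ ≤ (27 * C₀ ^ ((3:ℝ)/2) + 1) * ((Real.sqrt SA + Real.sqrt SB) *
        ((Real.sqrt S1) ^ ((1:ℝ)/2) * (Real.sqrt S2) ^ ((3:ℝ)/2))) :=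
        mul_le_mul_of_nonneg_right (by linarith) hP
    _ = (27 * C₀ ^ ((3:ℝ)/2) + 1) * (Real.sqrt SA + Real.sqrt SB) *
        (Real.sqrt S1) ^ ((1:ℝ)/2) * (Real.sqrt S2) ^ ((3:ℝ)/2) := by ring
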